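/- Let V : ℝ^d → ℝ be differentiable with L-Lipschitz gradient, bounded above by V*. Let (θ_t), (v_t) be sequences with θ_{t+1} = θ_t + η v_t, 0 < η ≤ 1/(2L). Suppose ∑_{t=0}^{T-1} ‖v_t - ∇V(θ_t)‖² ≤ (1/2) ∑_{t=0}^{T-1} ‖v_t‖² + S for some S ≥ 0. Then (1/T) ∑_{t=0}^{T-1} ‖∇V(θ_t)‖² ≤ 2(V* - V(θ_0))/(ηT) + S/T. -/

import Mathlib

/-!
The descent lemma `V (x + u) ≥ V x + ⟪∇V x, u⟫ - L/2 ‖u‖²`, applied to the step `u = η v` and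
combined with the polarization `2⟪∇V, v⟫ = ‖∇V‖² + ‖v‖² - ‖v - ∇V‖²`, gives a per-step increase
of at least `η/2 (‖∇V‖² + (1 - Lη)‖v‖² - ‖v - ∇V‖²)`. Summing, the increases telescope to at most
`V* - V θ₀`; the error budget absorbs `∑ ‖v - ∇V‖²` at the cost of half of `∑ ‖v‖²`, which
`Lη ≤ 1/2` leaves nonnegative.
-/

open scoped NNReal RealInnerProductSpace

section DescentLemma

variable {E F : Type*} [NormedAddCommGroup E] [NormedSpace ℝ E]
  [NormedAddCommGroup F] [NormedSpace ℝ F]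

theorem norm_sub_sub_fderiv_le_of_lipschitzWith {f : E → F} {f' : E → E →L[ℝ] F} {K : ℝ≥0}
    (hf : ∀ x, HasFDerivAt f (f' x) x) (hf' : LipschitzWith K f') (x u : E) :
    ‖f (x + u) - f x - f' x u‖ ≤ K / 2 * ‖u‖ ^ 2 := by
  set g : ℝ → F := fun s => f (x + s • u) - f x - s • f' x u
  have hg : ∀ s, HasDerivAt g (f' (x + s • u) u - f' x u) s := fun s => by
    have hline : HasDerivAt (fun s : ℝ => x + s • u) u s := by
      simpa using ((hasDerivAt_id s).smul_const u).const_add x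
    exact (((hf _).comp_hasDerivAt s hline).sub_const (f x)).sub
      (by simpa using (hasDerivAt_id s).smul_const (f' x u))
  have hB : ∀ s : ℝ, HasDerivAt (fun s => K / 2 * ‖u‖ ^ 2 * s ^ 2) (K * ‖u‖ ^ 2 * s) s :=
    fun s => ((hasDerivAt_pow 2 s).const_mul _).congr_deriv (by push_cast; ring)
  have bound : ∀ s ∈ Set.Ico (0 : ℝ) 1, ‖f' (x + s • u) u - f' x u‖ ≤ K * ‖u‖ ^ 2 * s := by
    intro s hs
    calc ‖f' (x + s • u) u - f' x u‖ = ‖(f' (x + s • u) - f' x) u‖ := rfl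
      _ ≤ ‖f' (x + s • u) - f' x‖ * ‖u‖ := ContinuousLinearMap.le_opNorm _ _
      _ ≤ K * ‖(x + s • u) - x‖ * ‖u‖ := by gcongr; exact hf'.norm_sub_le _ _
      _ = K * ‖u‖ ^ 2 * s := by
        rw [add_sub_cancel_left, norm_smul, Real.norm_of_nonneg hs.1]; ring
  have := image_norm_le_of_norm_deriv_right_le_deriv_boundary
    (fun s _ => (hg s).continuousAt.continuousWithinAt) (fun s _ => (hg s).hasDerivWithinAt)
    (by simp [g]) hB bound (Set.right_mem_Icc.2 zero_le_one)
  simpa [g] using this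

end DescentLemma

section GradientDescent

variable {E : Type*} [NormedAddCommGroup E] [InnerProductSpace ℝ E] [CompleteSpace E]
  {f : E → ℝ} {K : ℝ≥0}

open InnerProductSpace in
theorem add_inner_gradient_sub_le_of_lipschitzWith (hf : Differentiable ℝ f)
    (hK : LipschitzWith K (gradient f)) (x u : E) :
    f x + ⟪gradient f x, u⟫ - K / 2 * ‖u‖ ^ 2 ≤ f (x + u) := by
  have hfd : ∀ y, toDual ℝ E (gradient f y) = fderiv ℝ f y :=
    fun y => (toDual ℝ E).apply_symm_apply _
  have h := norm_sub_sub_fderiv_le_of_lipschitzWith (f' := fun y => toDual ℝ E (gradient f y))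
    (fun y => hfd y ▸ (hf y).hasFDerivAt) (by simpa using (toDual ℝ E).lipschitz.comp hK) x u
  rw [toDual_apply_apply, Real.norm_eq_abs, abs_le] at h
  linarith [h.1]

theorem descent_step_le (hf : Differentiable ℝ f) (hK : LipschitzWith K (gradient f))
    (x v : E) (η : ℝ) :
    η / 2 * (‖gradient f x‖ ^ 2 + (1 - K * η) * ‖v‖ ^ 2 - ‖v - gradient f x‖ ^ 2)
      ≤ f (x + η • v) - f x := by
  have h := add_inner_gradient_sub_le_of_lipschitzWith hf hK x (η • v)
  rw [real_inner_smul_right, norm_smul, mul_pow, Real.norm_eq_abs, sq_abs] at h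
  have hpol := norm_sub_sq_real v (gradient f x)
  rw [real_inner_comm] at hpol
  linear_combination h - η / 2 * hpol

theorem sum_descent_step_le (hf : Differentiable ℝ f) (hK : LipschitzWith K (gradient f))
    {θ v : ℕ → E} {η : ℝ} (hupd : ∀ t, θ (t + 1) = θ t + η • v t) (T : ℕ) :
    η / 2 * ∑ t ∈ Finset.range T,
        (‖gradient f (θ t)‖ ^ 2 + (1 - K * η) * ‖v t‖ ^ 2 - ‖v t - gradient f (θ t)‖ ^ 2)
      ≤ f (θ T) - f (θ 0) := by
  rw [Finset.mul_sum, ← Finset.sum_range_sub (fun t => f (θ t))]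
  gcongr with t
  rw [hupd]
  exact descent_step_le hf hK _ _ _

end GradientDescent

theorem stmt_8_general {d : ℕ} (V : EuclideanSpace ℝ (Fin d) → ℝ) (L η Vstar S : ℝ)
    (hdiff : Differentiable ℝ V)
    (hlip : LipschitzWith (Real.toNNReal L) (gradient V))
    (hbd : ∀ θ, V θ ≤ Vstar)
    (hη : 0 < η) (hη2 : η ≤ 1 / (2 * L))
    (θ v : ℕ → EuclideanSpace ℝ (Fin d))
    (hupd : ∀ t, θ (t + 1) = θ t + η • v t)
    (T : ℕ)
    (herr : ∑ t ∈ Finset.range T, ‖v t - gradient V (θ t)‖ ^ 2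
        ≤ (1 / 2) * ∑ t ∈ Finset.range T, ‖v t‖ ^ 2 + S) :
    (1 / (T : ℝ)) * ∑ t ∈ Finset.range T, ‖gradient V (θ t)‖ ^ 2
      ≤ 2 * (Vstar - V (θ 0)) / (η * T) + S / T := by
  have hLη : (L.toNNReal : ℝ) * η ≤ 1 / 2 := by
    rcases le_or_gt L 0 with hL | hL
    · rw [Real.toNNReal_of_nonpos hL]; norm_num
    · rw [Real.coe_toNNReal L hL.le]
      rw [le_div_iff₀ (by positivity)] at hη2
      linarith
  set A := ∑ t ∈ Finset.range T, ‖gradient V (θ t)‖ ^ 2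
  set B := ∑ t ∈ Finset.range T, ‖v t‖ ^ 2
  have hdescent := sum_descent_step_le hdiff hlip hupd T
  rw [Finset.sum_sub_distrib, Finset.sum_add_distrib, ← Finset.mul_sum] at hdescent
  have hB : 0 ≤ η * (1 / 2 - L.toNNReal * η) * B := by
    have := sub_nonneg.2 hLη
    positivity
  have key : η * A ≤ 2 * (Vstar - V (θ 0)) + η * S := by
    linear_combination 2 * hdescent + 2 * hbd (θ T) + η * herr + hB
  calc 1 / (T : ℝ) * A = η * A / (η * T) := by
        rw [mul_div_mul_left _ _ hη.ne', one_div_mul_eq_div]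
    _ ≤ (2 * (Vstar - V (θ 0)) + η * S) / (η * T) := by gcongr
    _ = 2 * (Vstar - V (θ 0)) / (η * T) + S / T := by
        rw [add_div, mul_div_mul_left _ _ hη.ne']

theorem stmt_8 {d : ℕ} (V : EuclideanSpace ℝ (Fin d) → ℝ) (L η Vstar S : ℝ)
    (hL : 0 < L) (hdiff : Differentiable ℝ V)
    (hlip : LipschitzWith (Real.toNNReal L) (gradient V))
    (hbd : ∀ θ, V θ ≤ Vstar)
    (hη : 0 < η) (hη2 : η ≤ 1 / (2 * L))
    (θ v : ℕ → EuclideanSpace ℝ (Fin d))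
    (hupd : ∀ t, θ (t + 1) = θ t + η • v t)
    (T : ℕ) (hT : 1 ≤ T) (hS : 0 ≤ S)
    (herr : ∑ t ∈ Finset.range T, ‖v t - gradient V (θ t)‖ ^ 2
        ≤ (1 / 2) * ∑ t ∈ Finset.range T, ‖v t‖ ^ 2 + S) :
    (1 / (T : ℝ)) * ∑ t ∈ Finset.range T, ‖gradient V (θ t)‖ ^ 2
      ≤ 2 * (Vstar - V (θ 0)) / (η * T) + S / T :=
  stmt_8_general V L η Vstar S hdiff hlip hbd hη hη2 θ v hupd T herr
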